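/- Fix constants α > 0, c > 0 and ε > 0 with ε < c. Suppose for each n, f_n is a function on {1,…,⌊n/2⌋} with f_n(k) ≥ c for all k, and that the family (f_n) satisfies: for every M > 0 there exist δ > 0 and n₁ such that f_n(u) ≥ M for all n ≥ n₁ and all 1 ≤ u ≤ δn. Then for every ε' > 0 there exists n₀ such that for every n ≥ n₀ and every graph G on n vertices that is an f_n-expander, with probability at least 1 − ε' under the deletion process with parameter α, the graph Ĝ is a (c − ε)-expander. -/

import Mathlib

open MeasureTheory Matrix

noncomputable def bern (p : ENNReal) : Measure Bool :=
  (PMF.bernoulli (min p 1).toNNReal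
    (by simpa using ENNReal.toNNReal_mono ENNReal.one_ne_top (min_le_right p 1))).toMeasure

noncomputable def delMeasure (n : ℕ) (α : ℝ) : Measure (Fin n → Bool) :=
  Measure.pi fun _ => bern (ENNReal.ofReal ((n : ℝ) ^ (-α)))

def survivors {n : ℕ} (ω : Fin n → Bool) : Set (Fin n) := {v | ω v = false}

def nbhd {V : Type*} (H : SimpleGraph V) (U : Set V) : Set V :=
  {v | v ∉ U ∧ ∃ u ∈ U, H.Adj u v}

def IsBetaExpander {V : Type*} (H : SimpleGraph V) (β : ℝ) : Prop :=
  ∀ U : Set V, U.Nonempty → (U.ncard : ℝ) ≤ (Nat.card V : ℝ) / 2 →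
    β * U.ncard ≤ ((nbhd H U).ncard : ℝ)


def IsFExpander {V : Type*} (H : SimpleGraph V) (f : ℕ → ℝ) : Prop :=
  ∀ U : Set V, U.Nonempty → (U.ncard : ℝ) ≤ (Nat.card V : ℝ) / 2 →
    f U.ncard * U.ncard ≤ ((nbhd H U).ncard : ℝ)

/-! If the surviving graph is not a `(c - ε)`-expander, some nonempty `U` with `|U| ≤ n/2` has
fewer than `(c - ε)|U|` surviving neighbours, so at least `t = |N(U)| - ⌊(c - ε)|U|⌋` vertices of
`N(U)` were deleted. A union bound over `U` and over the `t`-subsets of `N(U)` bounds the failure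
probability by `∑_U C(|N(U)|, t) p^t` with `p = n^(-α)`.

For `|U| ≤ δn` the growth hypothesis gives `f ≥ c + (c + 3)/α`, so `p^t ≤ n^(-(c+3)|U|)` beats
`C(|N(U)|, t) ≤ n^(c|U|)`, and these sets contribute at most
`∑_{U ≠ ∅} n^(-3|U|) ≤ exp(n⁻²) - 1`. For `|U| > δn` we still have `t ≥ ε|U| ≥ εδn`, so each of
the at most `2^n` terms is at most `2^n n^(-αεδn)`, for a total of `(4 n^(-αεδ))^n`. Both
bounds tend to `0`. -/

open Finset Filter Topology

instance (p : ENNReal) : IsProbabilityMeasure (bern p) :=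
  PMF.toMeasure.isProbabilityMeasure _

instance (n : ℕ) (α : ℝ) : IsProbabilityMeasure (delMeasure n α) := by
  unfold delMeasure; infer_instance

lemma bern_singleton_true (p : ENNReal) : bern p {true} = min p 1 := by
  have hne : min p 1 ≠ ⊤ := ne_top_of_le_ne_top ENNReal.one_ne_top (min_le_right p 1)
  simp [bern, PMF.bernoulli, ENNReal.coe_toNNReal hne]

section Bernoulli

variable {ι : Type*} [Fintype ι] (p : ENNReal)

lemma pi_bern_forall_true_le (W : Finset ι) :
    Measure.pi (fun _ : ι => bern p) {ω | ∀ v ∈ W, ω v = true} ≤ p ^ #W := by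
  classical
  have hcyl : {ω : ι → Bool | ∀ v ∈ W, ω v = true}
      = Set.univ.pi fun v => if v ∈ W then {true} else Set.univ := by
    ext ω; simp only [Set.mem_ofPred_eq, Set.mem_pi, Set.mem_univ, true_implies]
    refine forall_congr' fun v => ?_
    split_ifs with hv <;> simp [hv]
  rw [hcyl, Measure.pi_pi]
  calc ∏ v, bern p (if v ∈ W then {true} else Set.univ)
      = ∏ v ∈ W, min p 1 := by
        simp_rw [apply_ite (bern p), bern_singleton_true, measure_univ]
        rw [prod_ite_mem, univ_inter]
    _ = min p 1 ^ #W := prod_const _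
    _ ≤ p ^ #W := pow_le_pow_left' (min_le_left _ _) _

lemma pi_bern_le_card_filter_true_le (N : Finset ι) (t : ℕ) :
    Measure.pi (fun _ : ι => bern p) {ω | t ≤ #{v ∈ N | ω v = true}} ≤ (#N).choose t * p ^ t := by
  classical
  have hcover : {ω : ι → Bool | t ≤ #{v ∈ N | ω v = true}}
      ⊆ ⋃ W ∈ N.powersetCard t, {ω | ∀ v ∈ W, ω v = true} := by
    intro ω hω
    obtain ⟨W, hWN, hWt⟩ := exists_subset_card_eq hω
    simp only [Set.mem_iUnion, mem_powersetCard]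
    exact ⟨W, ⟨hWN.trans (filter_subset _ _), hWt⟩, fun v hv => (mem_filter.1 (hWN hv)).2⟩
  calc _ ≤ _ := measure_mono hcover
    _ ≤ ∑ W ∈ N.powersetCard t, Measure.pi (fun _ : ι => bern p) {ω | ∀ v ∈ W, ω v = true} :=
        measure_biUnion_finset_le _ _
    _ ≤ ∑ W ∈ N.powersetCard t, p ^ t :=
        sum_le_sum fun W hW => (mem_powersetCard.1 hW).2 ▸ pi_bern_forall_true_le p W
    _ = _ := by rw [sum_const, card_powersetCard, nsmul_eq_mul]

end Bernoulli

section Graph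

variable {V : Type*} (G : SimpleGraph V) (S : Set V)

lemma image_val_nbhd_induce (U : Set S) :
    Subtype.val '' nbhd (G.induce S) U = nbhd G (Subtype.val '' U) ∩ S := by
  ext v
  constructor
  · rintro ⟨⟨v, hvS⟩, ⟨hvU, u, huU, hadj⟩, rfl⟩
    refine ⟨⟨?_, u, ⟨u, huU, rfl⟩, hadj⟩, hvS⟩
    rintro ⟨w, hwU, hwv⟩
    exact hvU (Subtype.ext hwv ▸ hwU)
  · rintro ⟨⟨hvU, _, ⟨u, huU, rfl⟩, hadj⟩, hvS⟩
    exact ⟨⟨v, hvS⟩, ⟨fun h => hvU ⟨_, h, rfl⟩, u, huU, hadj⟩, rfl⟩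

lemma exists_ncard_nbhd_sub_floor_le_ncard_diff [Finite V] {β : ℝ}
    (h : ¬ IsBetaExpander (G.induce S) β) :
    ∃ U : Set V, U.Nonempty ∧ (U.ncard : ℝ) ≤ Nat.card V / 2 ∧
      (nbhd G U).ncard - ⌊β * U.ncard⌋₊ ≤ (nbhd G U \ S).ncard := by
  simp only [IsBetaExpander, not_forall, not_le] at h
  obtain ⟨U, hne, hhalf, hlt⟩ := h
  have hcard : (Subtype.val '' U).ncard = U.ncard :=
    Set.ncard_image_of_injective _ Subtype.val_injective
  have hinter : (nbhd G (Subtype.val '' U) ∩ S).ncard = (nbhd (G.induce S) U).ncard := by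
    rw [← image_val_nbhd_induce, Set.ncard_image_of_injective _ Subtype.val_injective]
  refine ⟨Subtype.val '' U, hne.image _, ?_, ?_⟩
  · have hS : (Nat.card S : ℝ) ≤ Nat.card V := mod_cast Finite.card_subtype_le (· ∈ S)
    rw [hcard]
    linarith
  · have hsurv : (nbhd G (Subtype.val '' U) ∩ S).ncard ≤ ⌊β * (Subtype.val '' U).ncard⌋₊ :=
      Nat.le_floor (by rw [hinter, hcard]; exact hlt.le)
    have := Set.ncard_inter_add_ncard_sdiff_eq_ncard (nbhd G (Subtype.val '' U)) S
    omega

end Graph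

lemma sum_pow_card_filter_nonempty_le {ι : Type*} [Fintype ι] {y : ℝ} (hy : 0 ≤ y) :
    ∑ U : Finset ι with U.Nonempty, y ^ #U ≤ Real.exp (Fintype.card ι * y) - 1 := by
  have hsplit : ∑ U : Finset ι, y ^ #U = ∑ U : Finset ι with U.Nonempty, y ^ #U + 1 := by
    have hempty : ({U : Finset ι | ¬U.Nonempty} : Finset _) = {∅} := by
      ext; simp [not_nonempty_iff_eq_empty]
    rw [← sum_filter_add_sum_filter_not univ Finset.Nonempty, hempty]
    simp
  have hbinom : ∑ U : Finset ι, y ^ #U = (y + 1) ^ Fintype.card ι := by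
    simpa using Fintype.sum_pow_mul_eq_add_pow ι y 1
  have hexp : (y + 1) ^ Fintype.card ι ≤ Real.exp (Fintype.card ι * y) := by
    rw [Real.exp_nat_mul]
    exact pow_le_pow_left₀ (by positivity) (Real.add_one_le_exp y) _
  linarith

lemma choose_mul_rpow_neg_le_rpow {n N k : ℕ} (hn : 1 ≤ n) (hN : N ≤ n) (hk : k ≤ N) (α : ℝ) :
    (N.choose (N - k) : ℝ) * (n : ℝ) ^ (-α * (N - k : ℕ))
      ≤ (n : ℝ) ^ ((k : ℝ) - α * (N - k : ℕ)) := by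
  have hn' : (0 : ℝ) < n := by exact_mod_cast hn
  have hchoose : (N.choose (N - k) : ℝ) ≤ (n : ℝ) ^ (k : ℝ) := by
    rw [Nat.choose_symm hk, Real.rpow_natCast]
    exact_mod_cast (Nat.choose_le_pow N k).trans (Nat.pow_le_pow_left hN k)
  rw [sub_eq_add_neg, Real.rpow_add hn', neg_mul]
  exact mul_le_mul_of_nonneg_right hchoose (by positivity)

open Real in
lemma tendsto_exp_sub_one_add_pow {s : ℝ} (hs : 0 < s) :
    Tendsto (fun n : ℕ => exp (n * (n : ℝ) ^ (-3 : ℝ)) - 1 + (4 * (n : ℝ) ^ (-s)) ^ n)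
      atTop (𝓝 0) := by
  have hrpow : ∀ r : ℝ, 0 < r → Tendsto (fun n : ℕ => (n : ℝ) ^ (-r)) atTop (𝓝 0) :=
    fun r hr => (tendsto_rpow_neg_atTop hr).comp tendsto_natCast_atTop_atTop
  have hlin : Tendsto (fun n : ℕ => (n : ℝ) * (n : ℝ) ^ (-3 : ℝ)) atTop (𝓝 0) := by
    refine (hrpow 2 two_pos).congr' ?_
    filter_upwards [eventually_gt_atTop 0] with n hn
    have hn' : (0 : ℝ) < n := by exact_mod_cast hn
    rw [← Real.rpow_one_add' hn'.le (by norm_num)]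
    norm_num
  have hexp : Tendsto (fun n : ℕ => exp (n * (n : ℝ) ^ (-3 : ℝ)) - 1) atTop (𝓝 0) := by
    simpa using ((continuous_exp.tendsto 0).comp hlin).sub_const 1
  have hbase : Tendsto (fun n : ℕ => 4 * (n : ℝ) ^ (-s)) atTop (𝓝 0) := by
    simpa using (hrpow s hs).const_mul 4
  have hpow : Tendsto (fun n : ℕ => (4 * (n : ℝ) ^ (-s)) ^ n) atTop (𝓝 0) := by
    refine tendsto_of_tendsto_of_tendsto_of_le_of_le' tendsto_const_nhds hbase
      (Eventually.of_forall fun n => by positivity) ?_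
    filter_upwards [hbase.eventually (ge_mem_nhds one_pos), eventually_gt_atTop 0] with n h1 hn
    exact pow_le_of_le_one (by positivity) h1 hn.ne'
  simpa using hexp.add hpow

lemma choose_mul_rpow_neg_le_of_expansion {n N u : ℕ} (hn : 1 ≤ n) (hN : N ≤ n) (hu : 1 ≤ u)
    {α c ε δ F : ℝ} (hα : 0 < α) (hε : 0 < ε) (hεc : ε < c) (hF : c ≤ F)
    (hFδ : (u : ℝ) ≤ δ * n → c + (c + 3) / α ≤ F) (hNF : F * u ≤ N) :
    (N.choose (N - ⌊(c - ε) * u⌋₊) : ℝ) * (n : ℝ) ^ (-α * (N - ⌊(c - ε) * u⌋₊ : ℕ))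
      ≤ ((n : ℝ) ^ (-3 : ℝ)) ^ u + 2 ^ n * ((n : ℝ) ^ (-(α * ε * δ))) ^ n := by
  set k := ⌊(c - ε) * u⌋₊
  have hn' : (1 : ℝ) ≤ n := by exact_mod_cast hn
  have hu' : (1 : ℝ) ≤ u := by exact_mod_cast hu
  have hk : (k : ℝ) ≤ (c - ε) * u := Nat.floor_le (by nlinarith)
  have hkN : k ≤ N := by exact_mod_cast (show (k : ℝ) ≤ N by nlinarith)
  have ht : ((N - k : ℕ) : ℝ) = N - k := Nat.cast_sub hkN
  have hdeficit : (F - (c - ε)) * u ≤ (N - k : ℕ) := by rw [ht]; linarith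
  by_cases hsmall : (u : ℝ) ≤ δ * n
  · have hα' : α * ((c + 3) / α) = c + 3 := mul_div_cancel₀ _ hα.ne'
    have hexp : (k : ℝ) - α * (N - k : ℕ) ≤ -3 * u := by
      have : (c + 3) / α * u ≤ (N - k : ℕ) := by nlinarith [hFδ hsmall]
      nlinarith
    calc _ ≤ (n : ℝ) ^ ((k : ℝ) - α * (N - k : ℕ)) := choose_mul_rpow_neg_le_rpow hn hN hkN α
      _ ≤ (n : ℝ) ^ (-3 * u : ℝ) := Real.rpow_le_rpow_of_exponent_le hn' hexp
      _ = ((n : ℝ) ^ (-3 : ℝ)) ^ u := by rw [Real.rpow_mul (by positivity), Real.rpow_natCast]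
      _ ≤ _ := le_add_of_nonneg_right (by positivity)
  · have hexp : -α * (N - k : ℕ) ≤ -(α * ε * δ) * n := by
      have : ε * (δ * n) ≤ (N - k : ℕ) := by nlinarith
      nlinarith
    have hchoose : (N.choose (N - k) : ℝ) ≤ 2 ^ n := by
      exact_mod_cast (Nat.choose_le_two_pow N _).trans (Nat.pow_le_pow_right two_pos hN)
    calc _ ≤ 2 ^ n * (n : ℝ) ^ (-(α * ε * δ) * n) :=
          mul_le_mul hchoose (Real.rpow_le_rpow_of_exponent_le hn' hexp) (by positivity)
            (by positivity)
      _ = 2 ^ n * ((n : ℝ) ^ (-(α * ε * δ))) ^ n := by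
          rw [Real.rpow_mul (by positivity), Real.rpow_natCast]
      _ ≤ _ := le_add_of_nonneg_left (by positivity)

lemma delMeasure_not_isBetaExpander_le {n : ℕ} (hn : 1 ≤ n) {α c ε δ : ℝ} (hα : 0 < α)
    (hε : 0 < ε) (hεc : ε < c) {f : ℕ → ℝ}
    (hf : ∀ k : ℕ, 1 ≤ k → (k : ℝ) ≤ n / 2 → c ≤ f k)
    (hfδ : ∀ k : ℕ, 1 ≤ k → (k : ℝ) ≤ δ * n → c + (c + 3) / α ≤ f k)
    {G : SimpleGraph (Fin n)} (hG : IsFExpander G f) :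
    delMeasure n α {ω | ¬ IsBetaExpander (G.induce (survivors ω)) (c - ε)}
      ≤ ENNReal.ofReal (Real.exp (n * (n : ℝ) ^ (-3 : ℝ)) - 1
          + (4 * (n : ℝ) ^ (-(α * ε * δ))) ^ n) := by
  classical
  set N : Finset (Fin n) → Finset (Fin n) := fun U => (nbhd G U).toFinset
  set t : Finset (Fin n) → ℕ := fun U => #(N U) - ⌊(c - ε) * #U⌋₊
  set 𝒰 : Finset (Finset (Fin n)) := {U | U.Nonempty ∧ (#U : ℝ) ≤ n / 2}
  set X : ℝ := 2 ^ n * ((n : ℝ) ^ (-(α * ε * δ))) ^ n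
  have hcover : {ω | ¬ IsBetaExpander (G.induce (survivors ω)) (c - ε)}
      ⊆ ⋃ U ∈ 𝒰, {ω | t U ≤ #{v ∈ N U | ω v = true}} := by
    intro ω hω
    obtain ⟨U, hne, hhalf, hdel⟩ := exists_ncard_nbhd_sub_floor_le_ncard_diff G _ hω
    simp only [Nat.card_eq_fintype_card, Fintype.card_fin] at hhalf
    simp only [Set.mem_iUnion]
    refine ⟨U.toFinset, ?_, ?_⟩
    · exact mem_filter.2 ⟨mem_univ _, Set.toFinset_nonempty.2 hne,
        by rwa [← Set.ncard_eq_toFinset_card']⟩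
    · simp only [Set.mem_ofPred_eq, t, N, Set.coe_toFinset, ← Set.ncard_eq_toFinset_card']
      convert hdel using 1
      rw [← Set.ncard_coe_finset]
      congr 1
      ext v
      simp [survivors]
  have hterm : ∀ U ∈ 𝒰,
      (#(N U)).choose (t U) * (n : ℝ) ^ (-α * t U) ≤ ((n : ℝ) ^ (-3 : ℝ)) ^ #U + X := by
    intro U hU
    obtain ⟨hne, hhalf⟩ := (mem_filter.1 hU).2
    have hu : 1 ≤ #U := hne.card_pos
    have hexpand : f #U * #U ≤ #(N U) := by
      have := hG U (coe_nonempty.2 hne) (by simpa using hhalf)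
      rwa [Set.ncard_coe_finset, Set.ncard_eq_toFinset_card'] at this
    exact choose_mul_rpow_neg_le_of_expansion hn ((card_le_univ _).trans_eq (Fintype.card_fin n))
      hu hα hε hεc (hf _ hu hhalf) (hfδ _ hu) hexpand
  have hsum : ∑ U ∈ 𝒰, (((n : ℝ) ^ (-3 : ℝ)) ^ #U + X)
      ≤ Real.exp (n * (n : ℝ) ^ (-3 : ℝ)) - 1 + (4 * (n : ℝ) ^ (-(α * ε * δ))) ^ n := by
    rw [sum_add_distrib, sum_const, nsmul_eq_mul]
    gcongr
    · calc _ ≤ ∑ U : Finset (Fin n) with U.Nonempty, ((n : ℝ) ^ (-3 : ℝ)) ^ #U :=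
            sum_le_sum_of_subset_of_nonneg (monotone_filter_right univ fun _ _ hU => hU.1)
              fun _ _ _ => by positivity
        _ ≤ _ := by
          simpa only [Fintype.card_fin] using
            sum_pow_card_filter_nonempty_le (ι := Fin n) (y := (n : ℝ) ^ (-3 : ℝ)) (by positivity)
    · calc (#𝒰 : ℝ) * X ≤ 2 ^ n * X := by
            gcongr
            exact_mod_cast (card_le_univ 𝒰).trans_eq (by simp)
        _ = _ := by rw [mul_pow, ← mul_assoc, ← mul_pow]; norm_num
  calc _ ≤ ∑ U ∈ 𝒰, delMeasure n α {ω | t U ≤ #{v ∈ N U | ω v = true}} :=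
        (measure_mono hcover).trans (measure_biUnion_finset_le _ _)
    _ ≤ ∑ U ∈ 𝒰, ENNReal.ofReal ((#(N U)).choose (t U) * (n : ℝ) ^ (-α * t U)) := by
        refine sum_le_sum fun U _ => (pi_bern_le_card_filter_true_le _ _ _).trans_eq ?_
        rw [ENNReal.ofReal_mul (by positivity), ENNReal.ofReal_natCast,
          ← ENNReal.ofReal_pow (by positivity), ← Real.rpow_natCast,
          ← Real.rpow_mul (by positivity)]
    _ = _ := (ENNReal.ofReal_sum_of_nonneg fun U _ => by positivity).symm
    _ ≤ _ := ENNReal.ofReal_le_ofReal ((sum_le_sum hterm).trans hsum)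

theorem unbounded_expansion_deletion_general
    (α c ε : ℝ) (hα : 0 < α) (hε : 0 < ε) (hεc : ε < c)
    (f : ℕ → ℕ → ℝ)
    (hf : ∀ n k : ℕ, 1 ≤ k → (k : ℝ) ≤ (n : ℝ) / 2 → c ≤ f n k)
    (hgrow : ∀ M : ℝ, 0 < M → ∃ δ : ℝ, 0 < δ ∧ ∃ n₁ : ℕ, ∀ n : ℕ, n₁ ≤ n →
      ∀ u : ℕ, 1 ≤ u → (u : ℝ) ≤ δ * (n : ℝ) → M ≤ f n u) :
    ∀ ε' : ℝ, 0 < ε' → ∃ n₀ : ℕ, ∀ n : ℕ, n₀ ≤ n →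
      ∀ G : SimpleGraph (Fin n),
        IsFExpander G (f n) →
        1 - ENNReal.ofReal ε' ≤ delMeasure n α
          {ω : Fin n → Bool | IsBetaExpander (G.induce (survivors ω)) (c - ε)} := by
  intro ε' hε'
  obtain ⟨δ, hδ, n₁, hfδ⟩ := hgrow (c + (c + 3) / α) (by have := hε.trans hεc; positivity)
  obtain ⟨n₀, hn₀⟩ := eventually_atTop.1 <|
    ((tendsto_exp_sub_one_add_pow (by positivity : 0 < α * ε * δ)).eventually
      (ge_mem_nhds hε')).and (eventually_ge_atTop (max n₁ 1))
  refine ⟨n₀, fun n hn G hG => ?_⟩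
  obtain ⟨hbound, hn_large⟩ := hn₀ n hn
  have hbad := delMeasure_not_isBetaExpander_le (le_of_max_le_right hn_large) hα hε hεc (hf n)
    (hfδ n (le_of_max_le_left hn_large)) hG
  rw [tsub_le_iff_right]
  calc 1 = delMeasure n α Set.univ := measure_univ.symm
    _ ≤ _ := measure_univ_le_add_compl _
    _ ≤ _ := add_le_add_right (hbad.trans (ENNReal.ofReal_le_ofReal hbound)) _

theorem unbounded_expansion_deletion
    (α c ε : ℝ) (hα : 0 < α) (hc : 0 < c) (hε : 0 < ε) (hεc : ε < c)
    (f : ℕ → ℕ → ℝ)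
    (hf : ∀ n k : ℕ, 1 ≤ k → (k : ℝ) ≤ (n : ℝ) / 2 → c ≤ f n k)
    (hgrow : ∀ M : ℝ, 0 < M → ∃ δ : ℝ, 0 < δ ∧ ∃ n₁ : ℕ, ∀ n : ℕ, n₁ ≤ n →
      ∀ u : ℕ, 1 ≤ u → (u : ℝ) ≤ δ * (n : ℝ) → M ≤ f n u) :
    ∀ ε' : ℝ, 0 < ε' → ∃ n₀ : ℕ, ∀ n : ℕ, n₀ ≤ n →
      ∀ G : SimpleGraph (Fin n),
        IsFExpander G (f n) →
        1 - ENNReal.ofReal ε' ≤ delMeasure n α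
          {ω : Fin n → Bool | IsBetaExpander (G.induce (survivors ω)) (c - ε)} :=
  unbounded_expansion_deletion_general α c ε hα hε hεc f hf hgrow
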